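/- With the notation above (Flory case), the map t ↦ l_t (defined by l_t = e^{−t(M₀ − g₀(l_t))}, l_t ∈ [0,1) for t > 1/K) is differentiable and strictly decreasing on (1/K, ∞), with derivative dl_t/dt = −(M₀ − g₀(l_t)) l_t / (1 − t g₀'(l_t) l_t) < 0. -/

import Mathlib

/-! Put `A(x) = M₀ - g₀(x) = ∫ m (1 - x^m) dμ₀(m)`, positive on `(0,1)`. Taking logarithms, `l_t`
solves `T(x) = t` for `T(x) = -log x / A(x)`. Since `(1 - z) / (-log z)` is increasing on `(0,1)`
(concavity of `log`), its values at `z = x^m` integrate to show that `T` is strictly decreasing,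
so its right inverse `t ↦ l_t` is strictly decreasing and continuous, and the inverse function
theorem gives `dl_t/dt = 1 / T'(l_t)`. Using `-log l_t = t A(l_t)`,
`T'(l_t) = (t g₀'(l_t) l_t - 1) / (l_t A(l_t))`, and `t g₀'(l_t) l_t < 1` comes from integrating
`z (-log z) < 1 - z` at `z = l_t^m`. -/

open MeasureTheory Set Filter Topology Real
open scoped ENNReal

theorem mul_neg_log_lt_one_sub {z : ℝ} (hz0 : 0 < z) (hz1 : z < 1) : z * -log z < 1 - z := by
  have h := log_lt_sub_one_of_pos (inv_pos.2 hz0) (inv_ne_one.2 hz1.ne)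
  rwa [log_inv, ← mul_lt_mul_iff_right₀ hz0, mul_sub, mul_inv_cancel₀ hz0.ne', mul_one] at h

theorem one_sub_div_neg_log_lt {x y : ℝ} (hx : 0 < x) (hxy : x < y) (hy : y < 1) :
    (1 - x) / -log x < (1 - y) / -log y := by
  have hslope := strictConcaveOn_log_Ioi.secant_strict_mono (a := 1) (mem_Ioi.2 one_pos) hx
    (hx.trans hxy) (hxy.trans hy).ne hy.ne hxy
  have hlx : 0 < -log x := neg_pos.2 (log_neg hx (hxy.trans hy))
  have hly : 0 < -log y := neg_pos.2 (log_neg (hx.trans hxy) hy)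
  rw [log_one, sub_zero, sub_zero, ← neg_div_neg_eq, neg_sub, ← neg_div_neg_eq (log x), neg_sub,
    div_lt_div_iff₀ (by linarith) (by linarith)] at hslope
  rw [div_lt_div_iff₀ hlx hly]
  linarith

theorem mul_rpow_le_inv_neg_log {r m : ℝ} (hr0 : 0 < r) (hr1 : r < 1) :
    m * r ^ m ≤ (-log r)⁻¹ := by
  have hc : 0 < -log r := neg_pos.2 (log_neg hr0 hr1)
  calc m * r ^ m = (-log r)⁻¹ * ((-log r * m) / exp (-log r * m)) := by
        rw [rpow_def_of_pos hr0, div_eq_mul_inv, ← exp_neg]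
        field_simp
        rw [mul_div_cancel_right₀ _ (neg_ne_zero.1 hc.ne')]
    _ ≤ (-log r)⁻¹ * 1 := by
        gcongr
        rw [div_le_one (exp_pos _)]
        linarith [add_one_le_exp (-log r * m)]
    _ = (-log r)⁻¹ := mul_one _

theorem mul_rpow_sub_one_le {δ x r m : ℝ} (hδ : 0 < δ) (hδx : δ ≤ x) (hxr : x ≤ r) (hr1 : r < 1)
    (hm : 0 ≤ m) : m * x ^ (m - 1) ≤ (-log r)⁻¹ / δ := by
  have hx : 0 < x := hδ.trans_le hδx
  calc m * x ^ (m - 1) = m * x ^ m / x := by rw [rpow_sub_one hx.ne', mul_div_assoc]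
    _ ≤ m * r ^ m / δ :=
        div_le_div₀ (mul_nonneg hm (rpow_nonneg (hx.le.trans hxr) m)) (by gcongr) hδ hδx
    _ ≤ (-log r)⁻¹ / δ := by gcongr; exact mul_rpow_le_inv_neg_log (hx.trans_le hxr) hr1

theorem hasDerivAt_neg_log_div_of_neg_log_eq {g : ℝ → ℝ} {M D x t : ℝ} (hg : HasDerivAt g D x)
    (hx : x ≠ 0) (hA : M - g x ≠ 0) (hlog : -log x = t * (M - g x)) :
    HasDerivAt (fun y => -log y / (M - g y)) ((t * D * x - 1) / (x * (M - g x))) x := by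
  refine (((hasDerivAt_log hx).neg).div ((hasDerivAt_const x M).sub hg) hA).congr_deriv ?_
  simp only [Pi.neg_apply, Pi.sub_apply]
  rw [hlog]
  field_simp
  ring

theorem integral_lt_integral_of_ae_lt {α : Type*} [MeasurableSpace α] {μ : Measure α}
    {f g : α → ℝ} (hμ : μ ≠ 0) (hf : Integrable f μ) (hg : Integrable g μ)
    (hfg : ∀ᵐ a ∂μ, f a < g a) : ∫ a, f a ∂μ < ∫ a, g a ∂μ := by
  have hsupp : μ (Function.support fun a => g a - f a)ᶜ = 0 := by
    refine measure_mono_null (fun a ha => ?_) (ae_iff.1 hfg)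
    exact fun h => (sub_pos.2 h).ne' (Function.notMem_support.1 ha)
  have hpos : 0 < ∫ a, g a - f a ∂μ := by
    rw [integral_pos_iff_support_of_nonneg_ae (hfg.mono fun a h => (sub_pos.2 h).le) (hg.sub hf)]
    calc 0 < μ univ := Measure.measure_univ_pos.2 hμ
      _ ≤ μ (Function.support fun a => g a - f a) + 0 := hsupp ▸ measure_univ_le_add_compl _
      _ = _ := add_zero _
  rwa [integral_sub hg hf, sub_pos] at hpos

section MomentIntegrals

variable {μ : Measure ℝ}

theorem integrable_mul_rpow (hμ : ∀ᵐ m ∂μ, 0 < m) (hint : Integrable (fun m => m) μ) {x : ℝ}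
    (hx : x ∈ Icc 0 1) : Integrable (fun m => m * x ^ m) μ := by
  refine hint.mono (measurable_id.mul (measurable_const.pow measurable_id)).aestronglyMeasurable ?_
  filter_upwards [hμ] with m hm
  rw [norm_mul]
  exact mul_le_of_le_one_right (norm_nonneg m)
    (by rw [norm_of_nonneg (rpow_nonneg hx.1 m)]; exact rpow_le_one hx.1 hx.2 hm.le)

theorem integral_mul_rpow_lt (hμ0 : μ ≠ 0) (hμ : ∀ᵐ m ∂μ, 0 < m)
    (hint : Integrable (fun m => m) μ) {x : ℝ} (hx : x ∈ Ioo 0 1) :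
    ∫ m, m * x ^ m ∂μ < ∫ m, m ∂μ := by
  refine integral_lt_integral_of_ae_lt hμ0
    (integrable_mul_rpow hμ hint (Ioo_subset_Icc_self hx)) hint ?_
  filter_upwards [hμ] with m hm
  exact mul_lt_of_lt_one_right hm (rpow_lt_one hx.1.le hx.2 hm)

theorem strictAntiOn_neg_log_div_integral (hμ0 : μ ≠ 0) (hμ : ∀ᵐ m ∂μ, 0 < m)
    (hint : Integrable (fun m => m) μ) :
    StrictAntiOn (fun x => -log x / (∫ m, m ∂μ - ∫ m, m * x ^ m ∂μ)) (Ioo 0 1) := by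
  intro x hx y hy hxy
  have hintA : ∀ z ∈ Ioo (0 : ℝ) 1, Integrable (fun m => m - m * z ^ m) μ := fun z hz =>
    hint.sub (integrable_mul_rpow hμ hint (Ioo_subset_Icc_self hz))
  dsimp only
  rw [div_lt_div_iff₀ (sub_pos.2 (integral_mul_rpow_lt hμ0 hμ hint hy))
      (sub_pos.2 (integral_mul_rpow_lt hμ0 hμ hint hx)),
    ← integral_sub hint (integrable_mul_rpow hμ hint (Ioo_subset_Icc_self hx)),
    ← integral_sub hint (integrable_mul_rpow hμ hint (Ioo_subset_Icc_self hy)),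
    ← integral_const_mul, ← integral_const_mul]
  refine integral_lt_integral_of_ae_lt hμ0 ((hintA x hx).const_mul _)
    ((hintA y hy).const_mul _) ?_
  filter_upwards [hμ] with m hm
  have h := one_sub_div_neg_log_lt (rpow_pos_of_pos hx.1 m) (rpow_lt_rpow hx.1.le hxy hm)
    (rpow_lt_one hy.1.le hy.2 hm)
  rw [log_rpow hx.1, log_rpow hy.1,
    div_lt_div_iff₀ (neg_pos.2 (mul_neg_of_pos_of_neg hm (log_neg hx.1 hx.2)))
      (neg_pos.2 (mul_neg_of_pos_of_neg hm (log_neg hy.1 hy.2)))] at h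
  linarith

theorem integrable_sq_mul_rpow_sub_one (hμ : ∀ᵐ m ∂μ, 0 < m) (hint : Integrable (fun m => m) μ)
    {x : ℝ} (hx : x ∈ Ioo 0 1) : Integrable (fun m => m ^ 2 * x ^ (m - 1)) μ := by
  refine (hint.mul_const ((-log x)⁻¹ / x)).mono' ((measurable_id.pow_const 2).mul
    (measurable_const.pow (measurable_id.sub_const 1))).aestronglyMeasurable ?_
  filter_upwards [hμ] with m hm
  rw [norm_of_nonneg (mul_nonneg (sq_nonneg m) (rpow_nonneg hx.1.le _)), sq, mul_assoc]
  exact mul_le_mul_of_nonneg_left (mul_rpow_sub_one_le hx.1 le_rfl le_rfl hx.2 hm.le) hm.le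

-- Only the first moment of `μ` is finite, so the dominating function has to be linear in `m`.
theorem hasDerivAt_integral_mul_rpow (hμ : ∀ᵐ m ∂μ, 0 < m) (hint : Integrable (fun m => m) μ)
    {x₀ : ℝ} (hx₀ : x₀ ∈ Ioo 0 1) :
    HasDerivAt (fun x => ∫ m, m * x ^ m ∂μ) (∫ m, m ^ 2 * x₀ ^ (m - 1) ∂μ) x₀ := by
  obtain ⟨hx₀0, hx₀1⟩ := hx₀
  have hr1 : (1 + x₀) / 2 < 1 := by linarith
  have hnhds : Ioo (x₀ / 2) ((1 + x₀) / 2) ∈ 𝓝 x₀ := Ioo_mem_nhds (by linarith) (by linarith)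
  refine (hasDerivAt_integral_of_dominated_loc_of_deriv_le (F := fun x m => m * x ^ m)
    (F' := fun x m => m ^ 2 * x ^ (m - 1))
    (bound := fun m => m * ((-log ((1 + x₀) / 2))⁻¹ / (x₀ / 2))) hnhds
    (Eventually.of_forall fun x =>
      (measurable_id.mul (measurable_const.pow measurable_id)).aestronglyMeasurable)
    (integrable_mul_rpow hμ hint ⟨hx₀0.le, hx₀1.le⟩)
    (integrable_sq_mul_rpow_sub_one hμ hint ⟨hx₀0, hx₀1⟩).aestronglyMeasurable
    ?_ (hint.mul_const _) ?_).2
  · filter_upwards [hμ] with m hm x hx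
    have hx0 : 0 < x := by linarith [hx.1]
    rw [norm_of_nonneg (mul_nonneg (sq_nonneg m) (rpow_nonneg hx0.le _)), sq, mul_assoc]
    exact mul_le_mul_of_nonneg_left
      (mul_rpow_sub_one_le (by linarith) hx.1.le hx.2.le hr1 hm.le) hm.le
  · filter_upwards with m x hx
    have hx0 : x ≠ 0 := by linarith [hx.1]
    exact ((hasDerivAt_rpow_const (Or.inl hx0)).const_mul m).congr_deriv (by ring)

theorem neg_log_mul_mul_integral_lt (hμ0 : μ ≠ 0) (hμ : ∀ᵐ m ∂μ, 0 < m)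
    (hint : Integrable (fun m => m) μ) {x : ℝ} (hx : x ∈ Ioo 0 1) :
    -log x * x * ∫ m, m ^ 2 * x ^ (m - 1) ∂μ < ∫ m, m ∂μ - ∫ m, m * x ^ m ∂μ := by
  have hint₁ := integrable_mul_rpow hμ hint (Ioo_subset_Icc_self hx)
  rw [← integral_const_mul, ← integral_sub hint hint₁]
  refine integral_lt_integral_of_ae_lt hμ0
    ((integrable_sq_mul_rpow_sub_one hμ hint hx).const_mul _) (hint.sub hint₁) ?_
  filter_upwards [hμ] with m hm
  have h := mul_neg_log_lt_one_sub (rpow_pos_of_pos hx.1 m) (rpow_lt_one hx.1.le hx.2 hm)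
  have hxm : x * x ^ (m - 1) = x ^ m := by
    rw [rpow_sub_one hx.1.ne', mul_div_cancel₀ _ hx.1.ne']
  rw [log_rpow hx.1] at h
  linear_combination m * h + (-log x * m ^ 2) * hxm

end MomentIntegrals

theorem StrictAntiOn.strictAntiOn_of_rightInvOn {α β : Type*} [LinearOrder α] [LinearOrder β]
    {T : α → β} {l : β → α} {I : Set α} {S : Set β} (hT : StrictAntiOn T I) (hl : MapsTo l S I)
    (hinv : RightInvOn l T S) : StrictAntiOn l S := by
  intro a ha b hb hab
  rwa [← hT.lt_iff_gt (hl ha) (hl hb), hinv ha, hinv hb]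

theorem StrictAntiOn.continuousAt_of_rightInvOn {T l : ℝ → ℝ} {I S : Set ℝ} {t : ℝ}
    (hT : StrictAntiOn T I) (hl : MapsTo l S I) (hinv : RightInvOn l T S) (hS : S ∈ 𝓝 t)
    (hI : I ∈ 𝓝 (l t)) (hTc : ContinuousAt T (l t)) : ContinuousAt l t := by
  have himage : l '' S ∈ 𝓝 (l t) := by
    refine mem_of_superset
      (inter_mem hI (hTc.preimage_mem_nhds (by rwa [hinv (mem_of_mem_nhds hS)]))) ?_
    rintro x ⟨hxI, hxS⟩
    exact ⟨T x, hxS, hT.injOn (hl hxS) hxI (hinv hxS)⟩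
  exact continuous_ofDual.continuousAt.comp (continuousAt_of_monotoneOn_of_image_mem_nhds
    (hT.strictAntiOn_of_rightInvOn hl hinv).antitoneOn.dual_right hS himage)

theorem StrictAntiOn.hasDerivAt_of_rightInvOn {T l : ℝ → ℝ} {I S : Set ℝ} {t T' : ℝ}
    (hT : StrictAntiOn T I) (hl : MapsTo l S I) (hinv : RightInvOn l T S) (hS : S ∈ 𝓝 t)
    (hI : I ∈ 𝓝 (l t)) (hT' : HasDerivAt T T' (l t)) (hT'0 : T' ≠ 0) : HasDerivAt l T'⁻¹ t :=
  hT'.of_local_left_inverse (hT.continuousAt_of_rightInvOn hl hinv hS hI hT'.continuousAt) hT'0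
    (eventually_of_mem hS hinv)

theorem stmt_7_general (μ₀ : Measure ℝ) (hμ₀ : μ₀ ≠ 0)
    (hsupp : μ₀ (Set.Iic (0:ℝ)) = 0)
    (M₀ : ℝ)
    (hintm : Integrable (fun m : ℝ => m) μ₀)
    (hM₀ : ∫ m, m ∂μ₀ = M₀)
    (K : ℝ≥0∞)
    (g₀ : ℝ → ℝ)
    (hg₀ : ∀ x ∈ Set.Icc (0:ℝ) 1, g₀ x = ∫ m, m * x ^ m ∂μ₀)
    (l : ℝ → ℝ)
    (hl : ∀ t > (K⁻¹).toReal, l t ∈ Set.Ico (0:ℝ) 1 ∧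
      l t = Real.exp (-(t * (M₀ - g₀ (l t))))) :
    StrictAntiOn l (Set.Ioi (K⁻¹).toReal) ∧
    ∀ t > (K⁻¹).toReal,
      HasDerivAt l (-(M₀ - g₀ (l t)) * l t / (1 - t * deriv g₀ (l t) * l t)) t ∧
      -(M₀ - g₀ (l t)) * l t / (1 - t * deriv g₀ (l t) * l t) < 0 := by
  have hμ : ∀ᵐ m ∂μ₀, 0 < m := ae_iff.2 (by simp only [not_lt]; exact hsupp)
  have hg₀_eq : ∀ x ∈ Ioo (0 : ℝ) 1, g₀ x = ∫ m, m * x ^ m ∂μ₀ := fun x hx =>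
    hg₀ x (Ioo_subset_Icc_self hx)
  have hA : ∀ x ∈ Ioo (0 : ℝ) 1, 0 < M₀ - g₀ x := fun x hx => by
    rw [hg₀_eq x hx, ← hM₀]; exact sub_pos.2 (integral_mul_rpow_lt hμ₀ hμ hintm hx)
  set T : ℝ → ℝ := fun x => -log x / (M₀ - g₀ x)
  have hT : StrictAntiOn T (Ioo 0 1) :=
    (strictAntiOn_neg_log_div_integral hμ₀ hμ hintm).congr fun x hx => by
      simp only [T, hM₀, hg₀_eq x hx]
  have hl01 : MapsTo l (Ioi (K⁻¹).toReal) (Ioo 0 1) := fun t ht =>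
    ⟨(hl t ht).2 ▸ exp_pos _, (hl t ht).1.2⟩
  have hlog : ∀ t ∈ Ioi (K⁻¹).toReal, -log (l t) = t * (M₀ - g₀ (l t)) := fun t ht => by
    rw [(hl t ht).2, log_exp, neg_neg, ← (hl t ht).2]
  have hinv : RightInvOn l T (Ioi (K⁻¹).toReal) := fun t ht => by
    simp only [T, hlog t ht]; field_simp [(hA _ (hl01 ht)).ne']
  refine ⟨hT.strictAntiOn_of_rightInvOn hl01 hinv, fun t ht => ?_⟩
  obtain ⟨hx0, hx1⟩ := hl01 ht
  have hAx := hA (l t) ⟨hx0, hx1⟩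
  have hg' : HasDerivAt g₀ (∫ m, m ^ 2 * l t ^ (m - 1) ∂μ₀) (l t) :=
    (hasDerivAt_integral_mul_rpow hμ hintm ⟨hx0, hx1⟩).congr_of_eventuallyEq
      (eventually_of_mem (Ioo_mem_nhds hx0 hx1) hg₀_eq)
  rw [hg'.deriv]
  set D := ∫ m, m ^ 2 * l t ^ (m - 1) ∂μ₀
  have htD : t * D * l t < 1 := by
    have h := neg_log_mul_mul_integral_lt hμ₀ hμ hintm ⟨hx0, hx1⟩
    rw [← hg₀_eq _ ⟨hx0, hx1⟩, hM₀, hlog t ht] at h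
    exact (mul_lt_mul_iff_left₀ hAx).1 (by linarith)
  have hl' := hT.hasDerivAt_of_rightInvOn hl01 hinv (Ioi_mem_nhds ht) (Ioo_mem_nhds hx0 hx1)
    (hasDerivAt_neg_log_div_of_neg_log_eq hg' hx0.ne' hAx.ne' (hlog t ht))
    (div_ne_zero (by linarith) (by positivity))
  refine ⟨hl'.congr_deriv ?_, div_neg_of_neg_of_pos (by nlinarith) (by linarith)⟩
  rw [inv_div, ← neg_div_neg_eq, neg_sub]
  ring

/-- The map `t ↦ l_t` (Flory case) is differentiable and strictly
decreasing on `(1/K,∞)`, with `dl_t/dt = -(M₀ - g₀(l_t)) l_t / (1 - t g₀'(l_t) l_t) < 0`. -/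
theorem stmt_7 (μ₀ : Measure ℝ) [IsFiniteMeasure μ₀] (hμ₀ : μ₀ ≠ 0)
    (hsupp : μ₀ (Set.Iic (0:ℝ)) = 0)
    (M₀ : ℝ) (hM₀pos : 0 < M₀)
    (hintm : Integrable (fun m : ℝ => m) μ₀)
    (hM₀ : ∫ m, m ∂μ₀ = M₀)
    (K : ℝ≥0∞) (hKpos : 0 < K)
    (hK : ∫⁻ m, ENNReal.ofReal (m ^ 2) ∂μ₀ = K)
    (g₀ : ℝ → ℝ)
    (hg₀ : ∀ x ∈ Set.Icc (0:ℝ) 1, g₀ x = ∫ m, m * x ^ m ∂μ₀)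
    (l : ℝ → ℝ)
    (hl : ∀ t > (K⁻¹).toReal, l t ∈ Set.Ico (0:ℝ) 1 ∧
      l t = Real.exp (-(t * (M₀ - g₀ (l t))))) :
    StrictAntiOn l (Set.Ioi (K⁻¹).toReal) ∧
    ∀ t > (K⁻¹).toReal,
      HasDerivAt l (-(M₀ - g₀ (l t)) * l t / (1 - t * deriv g₀ (l t) * l t)) t ∧
      -(M₀ - g₀ (l t)) * l t / (1 - t * deriv g₀ (l t) * l t) < 0 :=
  stmt_7_general μ₀ hμ₀ hsupp M₀ hintm hM₀ K g₀ hg₀ l hl
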